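/- The number of connected induced subgraphs of size n containing a fixed vertex v in a graph of maximum degree Δ is at most (e·Δ)^{n-1}. -/

import Mathlib

/-!
Explore a connected set `γ ∋ v` greedily from `v`, always adding the vertex outside the current
list `L` whose key `Δ * (index in L of its first neighbour) + (its port label at that neighbour)`
is least. The successive keys strictly increase, since a vertex that only becomes reachable
through the newest vertex gets a larger index than every earlier candidate. A key, together with
the list built so far, determines the vertex it belongs to. Hence the set of the `#γ - 1` keys, a
subset of `[0, Δ (#γ - 1))`, determines `γ`, and there are at most
`C(Δ (n-1), n-1) ≤ (Δ (n-1))^(n-1) / (n-1)! ≤ (eΔ)^(n-1)` such sets.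
-/

open Finset

theorem StrictMonoOn.eqOn_Iio_of_image_eq {β : Type*} [Preorder β] {m : ℕ} {f g : ℕ → β}
    (hf : StrictMonoOn f (Set.Iio m)) (hg : StrictMonoOn g (Set.Iio m))
    (h : f '' Set.Iio m = g '' Set.Iio m) : Set.EqOn f g (Set.Iio m) := by
  have key : (fun i : Fin m => f i) = fun i : Fin m => g i := by
    refine (StrictMono.range_inj (fun (i j : Fin m) hij => hf i.2 j.2 hij)
      (fun (i j : Fin m) hij => hg i.2 j.2 hij)).1 ?_
    rwa [← Fin.range_val, ← Set.range_comp, ← Set.range_comp] at h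
  exact fun i hi => congrFun key ⟨i, hi⟩

theorem Nat.choose_mul_le_exp_one_mul_pow (Δ m : ℕ) :
    ((Δ * m).choose m : ℝ) ≤ (Real.exp 1 * Δ) ^ m :=
  calc ((Δ * m).choose m : ℝ) ≤ ((Δ * m : ℕ) : ℝ) ^ m / m.factorial := Nat.choose_le_pow_div m _
    _ = (m : ℝ) ^ m / m.factorial * (Δ : ℝ) ^ m := by push_cast; ring
    _ ≤ Real.exp m * (Δ : ℝ) ^ m := by
      gcongr; exact Real.pow_div_factorial_le_exp _ m.cast_nonneg m
    _ = (Real.exp 1 * Δ) ^ m := by rw [mul_pow, Real.exp_one_pow]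

namespace SimpleGraph

variable {V : Type*} {G : SimpleGraph V} {Δ : ℕ}

structure PortLabelling (G : SimpleGraph V) (Δ : ℕ) where
  label : V → V → ℕ
  injOn_label (u : V) : Set.InjOn (label u) (G.neighborSet u)
  label_lt {u w : V} : G.Adj u w → label u w < Δ

open scoped Classical in
noncomputable def PortLabelling.ofDegreeLE [G.LocallyFinite] (h : ∀ u, G.degree u ≤ Δ) :
    G.PortLabelling Δ where
  label u w := if hw : w ∈ G.neighborFinset u then (G.neighborFinset u).equivFin ⟨w, hw⟩ else 0
  injOn_label u w hw w' hw' heq := by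
    rw [mem_neighborSet, ← mem_neighborFinset] at hw hw'
    simpa only [hw, hw', dite_true, Fin.val_inj, Equiv.apply_eq_iff_eq, Subtype.mk.injEq] using heq
  label_lt {u w} huw := by
    have hw : w ∈ G.neighborFinset u := (mem_neighborFinset _ _ _).2 huw
    simpa only [hw, dite_true] using ((G.neighborFinset u).equivFin ⟨w, hw⟩).2.trans_le (h u)

variable [DecidableRel G.Adj]

theorem findIdx_adj_lt_length {L : List V} {w : V} (h : ∃ u ∈ L, G.Adj u w) :
    L.findIdx (G.Adj · w) < L.length :=
  List.findIdx_lt_length_of_exists (by simpa using h)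

theorem adj_getD_findIdx_adj {L : List V} {w : V} (h : ∃ u ∈ L, G.Adj u w) :
    G.Adj (L.getD (L.findIdx (G.Adj · w)) w) w := by
  rw [List.getD_eq_getElem _ _ (findIdx_adj_lt_length h)]
  simpa using List.findIdx_getElem (w := findIdx_adj_lt_length h)

namespace PortLabelling

variable (P : G.PortLabelling Δ)

def key (L : List V) (w : V) : ℕ :=
  Δ * L.findIdx (G.Adj · w) + P.label (L.getD (L.findIdx (G.Adj · w)) w) w

variable {P}

theorem key_append_of_adj {L : List V} {w : V} (h : ∃ u ∈ L, G.Adj u w) (L' : List V) :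
    P.key (L ++ L') w = P.key L w := by
  have hlt := findIdx_adj_lt_length h
  simp only [key, List.findIdx_append, hlt, if_true, List.getD_append _ _ _ _ hlt]

theorem key_lt {L : List V} {w : V} (h : ∃ u ∈ L, G.Adj u w) : P.key L w < Δ * L.length :=
  calc P.key L w < Δ * L.findIdx (G.Adj · w) + Δ :=
        Nat.add_lt_add_left (P.label_lt (adj_getD_findIdx_adj h)) _
    _ ≤ Δ * L.length := by
      rw [← Nat.mul_succ]
      exact Nat.mul_le_mul_left _ (findIdx_adj_lt_length h)

theorem le_key_append_of_not_adj {L : List V} {w : V} (h : ∀ u ∈ L, ¬ G.Adj u w) (L' : List V) :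
    Δ * L.length ≤ P.key (L ++ L') w := by
  have hL : L.findIdx (G.Adj · w) = L.length := List.findIdx_eq_length.2 (by simpa using h)
  simp only [key, List.findIdx_append, hL, lt_irrefl, if_false]
  exact le_add_right (Nat.mul_le_mul_left _ (Nat.le_add_left _ _))

theorem key_injOn (L : List V) : Set.InjOn (P.key L) {w | ∃ u ∈ L, G.Adj u w} := by
  intro w hw w' hw' heq
  have ha := P.label_lt (adj_getD_findIdx_adj hw)
  have ha' := P.label_lt (adj_getD_findIdx_adj hw')
  have hΔ : 0 < Δ := (Nat.zero_le _).trans_lt ha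
  have hidx : L.findIdx (G.Adj · w) = L.findIdx (G.Adj · w') := by
    have := congrArg (· / Δ) heq
    dsimp only [key] at this
    rwa [Nat.mul_add_div hΔ, Nat.mul_add_div hΔ, Nat.div_eq_of_lt ha, Nat.div_eq_of_lt ha',
      add_zero, add_zero] at this
  have hlt := findIdx_adj_lt_length hw'
  have hadj := adj_getD_findIdx_adj hw
  have hadj' := adj_getD_findIdx_adj hw'
  rw [key, key, hidx, Nat.add_left_cancel_iff] at heq
  rw [hidx] at hadj
  simp only [List.getD_eq_getElem _ _ hlt] at heq hadj hadj'
  exact P.injOn_label _ hadj hadj' heq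

end PortLabelling

variable [DecidableEq V] {γ : Finset V} {v : V}

variable (G) in
def frontierIn (γ : Finset V) (L : List V) : Finset V :=
  {w ∈ γ | w ∉ L ∧ ∃ u ∈ L, G.Adj u w}

theorem frontierIn_nonempty (hconn : (G.induce (γ : Set V)).Connected) {L : List V}
    (hL : ∀ u ∈ L, u ∈ γ) {u : V} (hu : u ∈ L) (hlen : L.length < #γ) :
    (G.frontierIn γ L).Nonempty := by
  obtain ⟨x, hx, hxL⟩ := exists_mem_notMem_of_card_lt_card (s := L.toFinset) (t := γ)
    ((List.toFinset_card_le L).trans_lt hlen)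
  rw [List.mem_toFinset] at hxL
  obtain ⟨p⟩ := hconn.preconnected ⟨u, hL u hu⟩ ⟨x, hx⟩
  obtain ⟨d, -, hd₁, hd₂⟩ := p.exists_boundary_dart {y | (y : V) ∈ L} hu hxL
  exact ⟨d.toProd.2, mem_filter.2 ⟨d.toProd.2.2, hd₂, _, hd₁, d.adj⟩⟩

namespace PortLabelling

variable (P : G.PortLabelling Δ) (γ v)

/-- `v` is a junk value: for a connected `γ ∋ v` the frontier is nonempty in the first `#γ - 1`
steps of the exploration. -/
noncomputable def next (L : List V) : V :=
  if h : (G.frontierIn γ L).Nonempty then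
    ((G.frontierIn γ L).exists_min_image (P.key L) h).choose
  else v

noncomputable def explore : ℕ → List V
  | 0 => [v]
  | k + 1 => explore k ++ [P.next γ v (explore k)]

noncomputable def stepKey (k : ℕ) : ℕ := P.key (P.explore γ v k) (P.next γ v (P.explore γ v k))

noncomputable def code : Finset ℕ := (range (#γ - 1)).image (P.stepKey γ v)

variable {P γ v}

theorem next_mem_frontierIn {L : List V} (h : (G.frontierIn γ L).Nonempty) :
    P.next γ v L ∈ G.frontierIn γ L := by
  rw [next, dif_pos h]
  exact ((G.frontierIn γ L).exists_min_image (P.key L) h).choose_spec.1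

theorem key_next_le {L : List V} {y : V} (hy : y ∈ G.frontierIn γ L) :
    P.key L (P.next γ v L) ≤ P.key L y := by
  rw [next, dif_pos ⟨y, hy⟩]
  exact ((G.frontierIn γ L).exists_min_image (P.key L) ⟨y, hy⟩).choose_spec.2 y hy

@[simp]
theorem length_explore (k : ℕ) : (P.explore γ v k).length = k + 1 := by
  induction k with
  | zero => rfl
  | succ k ih => simp [explore, ih]

theorem self_mem_explore (k : ℕ) : v ∈ P.explore γ v k := by
  induction k with
  | zero => simp [explore]
  | succ k ih => simp [explore, ih]

theorem explore_succ (k : ℕ) :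
    P.explore γ v (k + 1) = P.explore γ v k ++ [P.next γ v (P.explore γ v k)] := rfl

section Connected

variable (hv : v ∈ γ) (hconn : (G.induce (γ : Set V)).Connected)
include hv hconn

theorem nodup_explore_and_subset {k : ℕ} (hk : k < #γ) :
    (P.explore γ v k).Nodup ∧ ∀ u ∈ P.explore γ v k, u ∈ γ := by
  induction k with
  | zero => simpa [explore] using hv
  | succ k ih =>
    obtain ⟨hnd, hsub⟩ := ih (by omega)
    have hx := mem_filter.1 <| next_mem_frontierIn (P := P) (v := v) <|
      frontierIn_nonempty hconn hsub (self_mem_explore k) (by simpa using hk)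
    rw [explore_succ]
    refine ⟨hnd.append (List.nodup_singleton _) (by simpa using hx.2.1), ?_⟩
    simp only [List.mem_append, List.mem_singleton]
    rintro u (hu | rfl)
    exacts [hsub u hu, hx.1]

theorem next_explore_mem_frontierIn {k : ℕ} (hk : k + 1 < #γ) :
    P.next γ v (P.explore γ v k) ∈ G.frontierIn γ (P.explore γ v k) :=
  next_mem_frontierIn <| frontierIn_nonempty hconn
    (nodup_explore_and_subset hv hconn (by omega)).2 (self_mem_explore k) (by simpa using hk)

theorem toFinset_explore : (P.explore γ v (#γ - 1)).toFinset = γ := by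
  have hpos : 0 < #γ := card_pos.2 ⟨v, hv⟩
  obtain ⟨hnd, hsub⟩ := nodup_explore_and_subset (P := P) hv hconn (k := #γ - 1) (by omega)
  refine eq_of_subset_of_card_le (fun u hu => hsub u (List.mem_toFinset.1 hu)) ?_
  rw [List.toFinset_card_of_nodup hnd, length_explore]
  omega

theorem stepKey_lt_stepKey_succ {k : ℕ} (hk : k + 2 < #γ) :
    P.stepKey γ v k < P.stepKey γ v (k + 1) := by
  set L := P.explore γ v k
  have hx := mem_filter.1 (next_explore_mem_frontierIn (P := P) hv hconn (k := k) (by omega))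
  have hy := mem_filter.1 (next_explore_mem_frontierIn (P := P) hv hconn (k := k + 1) hk)
  simp only [explore_succ, List.mem_append, List.mem_singleton, not_or] at hy
  rw [stepKey, stepKey, explore_succ]
  by_cases hyL : ∃ u ∈ L, G.Adj u (P.next γ v (L ++ [P.next γ v L]))
  · rw [key_append_of_adj hyL]
    refine (key_next_le (mem_filter.2 ⟨hy.1, hy.2.1.1, hyL⟩)).lt_of_ne fun heq => ?_
    exact hy.2.1.2 (key_injOn L hx.2.2 hyL heq).symm
  · simp only [not_exists, not_and] at hyL
    exact (key_lt hx.2.2).trans_le (le_key_append_of_not_adj hyL _)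

theorem strictMonoOn_stepKey : StrictMonoOn (P.stepKey γ v) (Set.Iio (#γ - 1)) :=
  strictMonoOn_of_lt_add_one Set.ordConnected_Iio fun k _ _ hk =>
    stepKey_lt_stepKey_succ hv hconn (by simp at hk; omega)

theorem card_code : #(P.code γ v) = #γ - 1 := by
  rw [code, card_image_of_injOn (by simpa using (strictMonoOn_stepKey hv hconn).injOn),
    card_range]

theorem code_subset : P.code γ v ⊆ range (Δ * (#γ - 1)) := by
  simp only [code, image_subset_iff, mem_range]
  intro k hk
  have hx := mem_filter.1 (next_explore_mem_frontierIn (P := P) hv hconn (k := k) (by omega))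
  refine (key_lt hx.2.2).trans_le ?_
  rw [length_explore]
  exact Nat.mul_le_mul_left _ (by omega)

end Connected

theorem explore_eq_of_code_eq {γ' : Finset V} (hv : v ∈ γ)
    (hconn : (G.induce (γ : Set V)).Connected)
    (hv' : v ∈ γ') (hconn' : (G.induce (γ' : Set V)).Connected) (hcard : #γ = #γ')
    (hcode : P.code γ v = P.code γ' v) {k : ℕ} (hk : k < #γ) :
    P.explore γ v k = P.explore γ' v k := by
  have hstep : Set.EqOn (P.stepKey γ v) (P.stepKey γ' v) (Set.Iio (#γ - 1)) := by
    refine (strictMonoOn_stepKey hv hconn).eqOn_Iio_of_image_eq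
      (hcard ▸ strictMonoOn_stepKey hv' hconn') ?_
    simpa [code, hcard] using congrArg (fun s : Finset ℕ => (s : Set ℕ)) hcode
  induction k with
  | zero => rfl
  | succ k ih =>
    have hx := mem_filter.1 (next_explore_mem_frontierIn (P := P) hv hconn (k := k) hk)
    have hx' :=
      mem_filter.1 (next_explore_mem_frontierIn (P := P) hv' hconn' (k := k) (by omega))
    have hkey := hstep (Set.mem_Iio.2 (show k < #γ - 1 by omega))
    rw [stepKey, stepKey, ← ih (by omega)] at hkey
    rw [← ih (by omega)] at hx'
    rw [explore_succ, explore_succ, ← ih (by omega), key_injOn _ hx.2.2 hx'.2.2 hkey]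

theorem code_injOn (n : ℕ) :
    Set.InjOn (fun γ => P.code γ v)
      {γ : Finset V | #γ = n ∧ v ∈ γ ∧ (G.induce (γ : Set V)).Connected} := by
  rintro γ ⟨hcard, hv, hconn⟩ γ' ⟨hcard', hv', hconn'⟩ hcode
  have hpos : 0 < #γ := card_pos.2 ⟨v, hv⟩
  calc γ = (P.explore γ v (#γ - 1)).toFinset := (toFinset_explore hv hconn).symm
    _ = (P.explore γ' v (#γ' - 1)).toFinset := by
      rw [explore_eq_of_code_eq hv hconn hv' hconn' (hcard.trans hcard'.symm) hcode (by omega),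
        hcard, hcard']
    _ = γ' := toFinset_explore hv' hconn'

end PortLabelling

theorem PortLabelling.ncard_connected_le_choose (P : G.PortLabelling Δ) (v : V) (n : ℕ) :
    {γ : Finset V | #γ = n ∧ v ∈ γ ∧ (G.induce (γ : Set V)).Connected}.ncard ≤
      (Δ * (n - 1)).choose (n - 1) := by
  rw [← card_range (Δ * (n - 1)), ← card_powersetCard, ← Set.ncard_coe_finset]
  refine Set.ncard_le_ncard_of_injOn (fun γ => P.code γ v) ?_ (PortLabelling.code_injOn n)
  rintro γ ⟨rfl, hv, hconn⟩
  exact mem_powersetCard.2 ⟨P.code_subset hv hconn, P.card_code hv hconn⟩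

end SimpleGraph

theorem stmt_15_general {V : Type*} [Fintype V] (G : SimpleGraph V) [DecidableRel G.Adj]
    (Δ : ℕ) (hΔ : ∀ u, G.degree u ≤ Δ) (v : V) (n : ℕ) :
    ({γ : Finset V | γ.card = n ∧ v ∈ γ ∧ (G.induce (γ : Set V)).Connected}.ncard : ℝ)
      ≤ (Real.exp 1 * Δ) ^ (n - 1) := by
  classical
  calc _ ≤ ((Δ * (n - 1)).choose (n - 1) : ℝ) := by
        exact_mod_cast (SimpleGraph.PortLabelling.ofDegreeLE hΔ).ncard_connected_le_choose v n
    _ ≤ _ := Nat.choose_mul_le_exp_one_mul_pow Δ (n - 1)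

/-- In a graph of maximum degree `Δ`, the number of connected induced subgraphs
with `n` vertices containing a fixed vertex `v` is at most `(eΔ)^{n-1}`. -/
theorem stmt_15 {V : Type*} [Fintype V] (G : SimpleGraph V) [DecidableRel G.Adj]
    (Δ : ℕ) (hΔ : ∀ u, G.degree u ≤ Δ) (v : V) (n : ℕ) (hn : 1 ≤ n) :
    ({γ : Finset V | γ.card = n ∧ v ∈ γ ∧ (G.induce (γ : Set V)).Connected}.ncard : ℝ)
      ≤ (Real.exp 1 * Δ) ^ (n - 1) :=
  stmt_15_general G Δ hΔ v n
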